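/- arXiv:2304.07715 — 3 statements merged into one kernel-verified Lean document; each statement's English description precedes it below -/
import Mathlib

section
/- Let A be a Noetherian commutative ring of characteristic p such that A is a finite module over itself via the Frobenius σ_A, and let B = lim A/m^n be the completion of A at a maximal ideal m. Then the natural map B ⊗_{A, σ_A} A → B is an isomorphism. -/
open scoped TensorProduct

/-- A copy of the ring `A`, regarded as an `A`-algebra through the Frobenius `a ↦ a ^ p`. -/
def FrobTwist (p : ℕ) (A : Type*) : Type _ := A

/-- The identity map `A → FrobTwist p A`. -/
def FrobTwist.mk (p : ℕ) {A : Type*} : A → FrobTwist p A := id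

instance (p : ℕ) (A : Type*) [CommRing A] : CommRing (FrobTwist p A) :=
  inferInstanceAs (CommRing A)

noncomputable instance (p : ℕ) (A : Type*) [CommRing A] [Fact p.Prime] [CharP A p] :
    Algebra A (FrobTwist p A) :=
  letI : ExpChar A p := ExpChar.prime Fact.out
  (frobenius A p).toAlgebra

namespace Stmt3Aux

open AdicCompletion

variable (p : ℕ) [Fact p.Prime] {A : Type} [CommRing A] [CharP A p] (I : Ideal A)

/-- Frobenius of `A` as a ring hom. -/
noncomputable def σ : A →+* A :=
  letI : ExpChar A p := ExpChar.prime Fact.out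
  frobenius A p

lemma σ_apply (a : A) : σ p a = a ^ p := rfl

lemma smul_frobTwist (a : A) (m : FrobTwist p A) :
    a • m = FrobTwist.mk p (a ^ p) * m := rfl

/-- The identity map `FrobTwist p A → A`. -/
def un : FrobTwist p A → A := fun x => x

lemma un_mk (x : A) : un p (FrobTwist.mk p x) = x := rfl

lemma mem_smul_top (n : ℕ) (x : A) :
    x ∈ (I ^ n • ⊤ : Submodule A A) ↔ x ∈ I ^ n := by simp

/-- Multiplication by elements of `A` preserves the twisted submodules. -/
lemma mul_mem_twist (n : ℕ) (c : A) (x : FrobTwist p A)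
    (hx : x ∈ (I ^ n • ⊤ : Submodule A (FrobTwist p A))) :
    FrobTwist.mk p c * x ∈ (I ^ n • ⊤ : Submodule A (FrobTwist p A)) := by
  refine Submodule.smul_induction_on
    (p := fun z : FrobTwist p A =>
      FrobTwist.mk p c * z ∈ (I ^ n • ⊤ : Submodule A (FrobTwist p A)))
    hx (fun r hr m _ => ?_) (fun y z hy hz => ?_)
  · show FrobTwist.mk p c * (r • m) ∈ (I ^ n • ⊤ : Submodule A (FrobTwist p A))
    have h : FrobTwist.mk p c * r • m = r • (FrobTwist.mk p c * m) := by
      rw [smul_frobTwist, smul_frobTwist]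
      ring
    rw [h]
    exact Submodule.smul_mem_smul hr Submodule.mem_top
  · show FrobTwist.mk p c * (y + z) ∈ (I ^ n • ⊤ : Submodule A (FrobTwist p A))
    rw [mul_add]
    exact Submodule.add_mem _ hy hz

lemma mem_twist_iff (n : ℕ) (x : A) :
    FrobTwist.mk p x ∈ (I ^ n • ⊤ : Submodule A (FrobTwist p A)) ↔
      x ∈ (I.map (σ p)) ^ n := by
  have hmap : (I.map (σ p)) ^ n = (I ^ n).map (σ p) := (Ideal.map_pow _ _ _).symm
  rw [hmap]
  constructor
  · intro h
    refine Submodule.smul_induction_on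
      (p := fun z : FrobTwist p A => un p z ∈ (I ^ n).map (σ p))
      h (fun r hr m _ => ?_) (fun y z hy hz => ?_)
    · show un p (r • m) ∈ (I ^ n).map (σ p)
      have hrm : un p (r • m) = r ^ p * un p m := rfl
      rw [hrm]
      exact Ideal.mul_mem_right _ _ (Ideal.mem_map_of_mem (σ p) hr)
    · show un p (y + z) ∈ (I ^ n).map (σ p)
      have hyz : un p (y + z) = un p y + un p z := rfl
      rw [hyz]
      exact Ideal.add_mem _ hy hz
  · intro h
    have hspan : (I ^ n).map (σ p) = Ideal.span ((σ p) '' (I ^ n : Ideal A)) := rfl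
    rw [hspan] at h
    refine Submodule.span_induction
      (p := fun (z : A) _ =>
        FrobTwist.mk p z ∈ (I ^ n • ⊤ : Submodule A (FrobTwist p A)))
      ?_ ?_ ?_ ?_ h
    · rintro _ ⟨a, ha, rfl⟩
      have h1 : FrobTwist.mk p (σ p a) = a • (1 : FrobTwist p A) := by
        rw [smul_frobTwist, mul_one]
        rfl
      rw [h1]
      exact Submodule.smul_mem_smul ha Submodule.mem_top
    · exact Submodule.zero_mem _
    · exact fun y z _ _ hy hz => Submodule.add_mem _ hy hz
    · intro c z _ hz
      exact mul_mem_twist p I n c (FrobTwist.mk p z) hz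

lemma map_σ_le : I.map (σ p) ≤ I := by
  rw [Ideal.map_le_iff_le_comap]
  intro a ha
  show σ p a ∈ I
  rw [σ_apply]
  exact Ideal.pow_mem_of_mem _ ha p (Fact.out : p.Prime).pos

/-- The comparison map on level `n` quotients, from twisted to untwisted. -/
noncomputable def vmap (n : ℕ) :
    (FrobTwist p A ⧸ (I ^ n • ⊤ : Submodule A (FrobTwist p A))) →
      A ⧸ (I ^ n • ⊤ : Submodule A A) := fun x =>
  Quotient.liftOn x
    (fun z : FrobTwist p A =>
      (Submodule.Quotient.mk (un p z) : A ⧸ (I ^ n • ⊤ : Submodule A A)))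
    (fun a b h => by
      rw [Submodule.Quotient.eq]
      have h' : a - b ∈ (I ^ n • ⊤ : Submodule A (FrobTwist p A)) :=
        (Submodule.quotientRel_def _).mp h
      have h2 : un p (a - b) ∈ (I.map (σ p)) ^ n := (mem_twist_iff p I n _).mp h'
      exact (mem_smul_top I n _).mpr (Ideal.pow_right_mono (map_σ_le p I) n h2))

@[simp] lemma vmap_mk (n : ℕ) (x : FrobTwist p A) :
    vmap p I n (Submodule.Quotient.mk x) = Submodule.Quotient.mk (un p x) := rfl

/-- The comparison map on quotients in the other direction, with a shift. -/
noncomputable def umap (n k : ℕ) (hk : I ^ k ≤ I.map (σ p)) :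
    (A ⧸ (I ^ (k * n) • ⊤ : Submodule A A)) →
      FrobTwist p A ⧸ (I ^ n • ⊤ : Submodule A (FrobTwist p A)) := fun x =>
  Quotient.liftOn x
    (fun z : A =>
      (Submodule.Quotient.mk (FrobTwist.mk p z) :
        FrobTwist p A ⧸ (I ^ n • ⊤ : Submodule A (FrobTwist p A))))
    (fun a b h => by
      rw [Submodule.Quotient.eq]
      have h' : a - b ∈ (I ^ (k * n) • ⊤ : Submodule A A) :=
        (Submodule.quotientRel_def _).mp h
      have h1 : a - b ∈ ((I ^ k) ^ n : Ideal A) := by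
        rw [← pow_mul]
        exact (mem_smul_top I _ _).mp h'
      exact (mem_twist_iff p I n _).mpr (Ideal.pow_right_mono hk n h1))

@[simp] lemma umap_mk (n k : ℕ) (hk : I ^ k ≤ I.map (σ p)) (x : A) :
    umap p I n k hk (Submodule.Quotient.mk x) =
      Submodule.Quotient.mk (FrobTwist.mk p x) := rfl

lemma transitionMap_mk {M : Type*} [AddCommGroup M] [Module A M] {m n : ℕ} (hmn : m ≤ n)
    (x : M) : transitionMap I M hmn (Submodule.Quotient.mk x) = Submodule.Quotient.mk x := rfl

/-- The comparison map `AdicCompletion I (FrobTwist p A) → AdicCompletion I A`. -/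
noncomputable def cfun :
    AdicCompletion I (FrobTwist p A) → AdicCompletion I A := fun x =>
  ⟨fun n => vmap p I n (x.val n), by
    intro m n hmn
    show transitionMap I A hmn (vmap p I n (x.val n)) = vmap p I m (x.val m)
    obtain ⟨a, ha⟩ := Submodule.Quotient.mk_surjective _ (x.val n)
    have hx : x.val m = Submodule.Quotient.mk a := by
      rw [← x.property hmn, ← ha, transitionMap_mk]
    rw [← ha, hx, vmap_mk, vmap_mk, transitionMap_mk]⟩

@[simp] lemma cfun_val (x : AdicCompletion I (FrobTwist p A)) (n : ℕ) :
    (cfun p I x).val n = vmap p I n (x.val n) := rfl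

/-- The inverse comparison map. -/
noncomputable def cinv (k : ℕ) (hk : I ^ k ≤ I.map (σ p)) :
    AdicCompletion I A → AdicCompletion I (FrobTwist p A) := fun b =>
  ⟨fun n => umap p I n k hk (b.val (k * n)), by
    intro m n hmn
    show transitionMap I (FrobTwist p A) hmn (umap p I n k hk (b.val (k * n))) =
      umap p I m k hk (b.val (k * m))
    obtain ⟨a, ha⟩ := Submodule.Quotient.mk_surjective _ (b.val (k * n))
    have hx : b.val (k * m) = Submodule.Quotient.mk a := by
      rw [← b.property (Nat.mul_le_mul_left k hmn), ← ha, transitionMap_mk]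
    rw [← ha, hx, umap_mk, umap_mk, transitionMap_mk]⟩

lemma cinv_cfun (k : ℕ) (hk : I ^ k ≤ I.map (σ p)) (hk1 : 1 ≤ k)
    (x : AdicCompletion I (FrobTwist p A)) :
    cinv p I k hk (cfun p I x) = x := by
  refine AdicCompletion.ext (fun n => ?_)
  show umap p I n k hk (vmap p I (k * n) (x.val (k * n))) = x.val n
  obtain ⟨a, ha⟩ := Submodule.Quotient.mk_surjective _ (x.val (k * n))
  have hn : n ≤ k * n := by
    calc n = 1 * n := (one_mul n).symm
    _ ≤ k * n := Nat.mul_le_mul_right n hk1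
  have hx : x.val n = Submodule.Quotient.mk a := by
    rw [← x.property hn, ← ha, transitionMap_mk]
  rw [← ha, hx, vmap_mk, umap_mk]
  rfl

lemma cfun_cinv (k : ℕ) (hk : I ^ k ≤ I.map (σ p)) (hk1 : 1 ≤ k)
    (b : AdicCompletion I A) :
    cfun p I (cinv p I k hk b) = b := by
  refine AdicCompletion.ext (fun n => ?_)
  show vmap p I n (umap p I n k hk (b.val (k * n))) = b.val n
  obtain ⟨a, ha⟩ := Submodule.Quotient.mk_surjective _ (b.val (k * n))
  have hn : n ≤ k * n := by
    calc n = 1 * n := (one_mul n).symm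
    _ ≤ k * n := Nat.mul_le_mul_right n hk1
  have hx : b.val n = Submodule.Quotient.mk a := by
    rw [← b.property hn, ← ha, transitionMap_mk]
  rw [← ha, hx, umap_mk, vmap_mk]
  rfl

lemma cfun_zero : cfun p I 0 = 0 := by
  refine AdicCompletion.ext (fun n => ?_)
  show vmap p I n ((0 : AdicCompletion I (FrobTwist p A)).val n) = _
  rw [AdicCompletion.val_zero_apply, AdicCompletion.val_zero_apply,
    show (0 : FrobTwist p A ⧸ (I ^ n • ⊤ : Submodule A (FrobTwist p A))) =
    Submodule.Quotient.mk 0 from (Submodule.Quotient.mk_zero _).symm,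
    vmap_mk]
  exact congrArg (Submodule.Quotient.mk) rfl |>.trans (Submodule.Quotient.mk_zero _)

lemma cfun_add (x y : AdicCompletion I (FrobTwist p A)) :
    cfun p I (x + y) = cfun p I x + cfun p I y := by
  refine AdicCompletion.ext (fun n => ?_)
  show vmap p I n ((x + y).val n) = _
  rw [AdicCompletion.val_add_apply, AdicCompletion.val_add_apply, cfun_val, cfun_val]
  obtain ⟨a, ha⟩ := Submodule.Quotient.mk_surjective _ (x.val n)
  obtain ⟨b, hb⟩ := Submodule.Quotient.mk_surjective _ (y.val n)
  rw [← ha, ← hb, ← Submodule.Quotient.mk_add, vmap_mk, vmap_mk, vmap_mk]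
  show Submodule.Quotient.mk (un p a + un p b) = _
  rw [Submodule.Quotient.mk_add]

/-- Target copy of the completion, as an `A`-algebra via Frobenius followed by the
canonical map. -/
def Tgt : Type :=
  let _ := p
  AdicCompletion I A

noncomputable instance : CommRing (Tgt p I) := inferInstanceAs (CommRing (AdicCompletion I A))

noncomputable instance : Algebra A (Tgt p I) :=
  ((algebraMap A (AdicCompletion I A)).comp (σ p)).toAlgebra

/-- Frobenius on the completion, as an `A`-algebra map to the twisted copy. -/
noncomputable def f1 (h : CharP (AdicCompletion I A) p) :
    AdicCompletion I A →ₐ[A] Tgt p I :=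
  letI := h
  letI : ExpChar (AdicCompletion I A) p := ExpChar.prime Fact.out
  { toRingHom := frobenius (AdicCompletion I A) p
    commutes' := fun a => by
      show (algebraMap A (AdicCompletion I A) a) ^ p =
        algebraMap A (AdicCompletion I A) (a ^ p)
      rw [map_pow] }

lemma f1_apply (h : CharP (AdicCompletion I A) p) (b : AdicCompletion I A) :
    f1 p I h b = b ^ p := rfl

/-- The canonical map from the twisted copy of `A` to the (twisted copy of the)
completion, as an `A`-algebra map. -/
noncomputable def f2 : FrobTwist p A →ₐ[A] Tgt p I :=
  { toRingHom := (algebraMap A (AdicCompletion I A) :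
      FrobTwist p A →+* Tgt p I)
    commutes' := fun _ => rfl }

lemma f2_apply (m : A) :
    f2 p I (FrobTwist.mk p m) = algebraMap A (AdicCompletion I A) m := rfl

/-- The natural ring map `B ⊗_{A,σ} A → B`. -/
noncomputable def Emap (h : CharP (AdicCompletion I A) p) :
    (AdicCompletion I A ⊗[A] FrobTwist p A) →ₐ[A] Tgt p I :=
  Algebra.TensorProduct.lift (f1 p I h) (f2 p I) (fun _ _ => Commute.all _ _)

lemma Emap_tmul (h : CharP (AdicCompletion I A) p) (b : AdicCompletion I A) (m : A) :
    Emap p I h (b ⊗ₜ[A] FrobTwist.mk p m) =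
      b ^ p * algebraMap A (AdicCompletion I A) m := by
  rw [Emap, Algebra.TensorProduct.lift_tmul, f1_apply, f2_apply]
  rfl

lemma val_pow (j n : ℕ) (b : AdicCompletion I A) :
    (b ^ j).val n = (b.val n) ^ j := by
  induction j with
  | zero => rw [pow_zero, pow_zero, AdicCompletion.val_one]
  | succ j ih => rw [pow_succ, pow_succ, AdicCompletion.val_mul, ih]

lemma val_algebraMap (a : A) (n : ℕ) :
    (algebraMap A (AdicCompletion I A) a).val n = Submodule.Quotient.mk a := rfl

lemma Emap_eq (h : CharP (AdicCompletion I A) p)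
    (z : AdicCompletion I A ⊗[A] FrobTwist p A) :
    (Emap p I h z : AdicCompletion I A) =
      cfun p I (AdicCompletion.ofTensorProduct I (FrobTwist p A) z) := by
  induction z using TensorProduct.induction_on with
  | zero =>
      rw [_root_.map_zero, _root_.map_zero, cfun_zero]
      rfl
  | add x y hx hy =>
      rw [_root_.map_add, _root_.map_add, cfun_add, ← hx, ← hy]
      rfl
  | tmul b m =>
      rw [show (b ⊗ₜ[A] m : AdicCompletion I A ⊗[A] FrobTwist p A) =
          b ⊗ₜ[A] FrobTwist.mk p (un p m) from rfl,
        Emap_tmul, AdicCompletion.ofTensorProduct_tmul]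
      refine AdicCompletion.ext (fun n => ?_)
      obtain ⟨r, hr⟩ := Submodule.Quotient.mk_surjective _ (b.val n)
      have hL : (b ^ p * algebraMap A (AdicCompletion I A) (un p m)).val n =
          Submodule.Quotient.mk (r ^ p * un p m) := by
        rw [AdicCompletion.val_mul, val_pow, val_algebraMap, ← hr]
        simp only [Ideal.Quotient.mk_eq_mk]
        rw [← map_pow, ← map_mul]
      rw [hL]
      show _ = vmap p I n
        ((b • AdicCompletion.of I (FrobTwist p A) (FrobTwist.mk p (un p m))).val n)
      rw [AdicCompletion.smul_eval]
      have hof : (AdicCompletion.of I (FrobTwist p A) (FrobTwist.mk p (un p m))).val n =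
          Submodule.Quotient.mk (FrobTwist.mk p (un p m)) := rfl
      rw [hof, ← hr]
      have hsm : (Submodule.Quotient.mk r : A ⧸ (I ^ n • ⊤ : Submodule A A)) •
          (Submodule.Quotient.mk (FrobTwist.mk p (un p m)) :
            FrobTwist p A ⧸ (I ^ n • ⊤ : Submodule A (FrobTwist p A))) =
          Submodule.Quotient.mk (r • FrobTwist.mk p (un p m)) := by
        rw [Ideal.Quotient.mk_eq_mk, AdicCompletion.mk_smul_mk,
          Submodule.Quotient.mk_smul]
      rw [hsm, vmap_mk]
      rfl

lemma charP_completion (hI : I ≠ ⊤) : CharP (AdicCompletion I A) p := by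
  have h1 : (I ^ 1 : Ideal A) ≠ ⊤ := by rwa [pow_one]
  haveI : Nontrivial (A ⧸ I ^ 1) := Ideal.Quotient.nontrivial_iff.mpr h1
  haveI : Nontrivial (AdicCompletion I A) :=
    (AdicCompletion.evalₐ I 1).toRingHom.domain_nontrivial
  refine (CharP.charP_iff_prime_eq_zero (Fact.out : p.Prime)).mpr ?_
  have h2 : ((p : ℕ) : AdicCompletion I A) = algebraMap A (AdicCompletion I A) (p : A) :=
    (map_natCast (algebraMap A (AdicCompletion I A)) p).symm
  rw [h2, CharP.cast_eq_zero A p, _root_.map_zero]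

end Stmt3Aux

/-- Let `A` be a Noetherian commutative ring of characteristic `p` which
is a finite module over itself via the Frobenius `σ_A`, let `I` be a maximal ideal of `A`
and `B = lim A/Iⁿ` its `I`-adic completion.  Then the natural map
`B ⊗_{A, σ_A} A → B`, `b ⊗ a ↦ b^p · a`, is an isomorphism. -/
theorem stmt_3 (p : ℕ) [Fact p.Prime] (A : Type) [CommRing A] [IsNoetherianRing A]
    [CharP A p] (hfin : Module.Finite A (FrobTwist p A))
    (I : Ideal A) (hI : I.IsMaximal) :
    ∃ e : (AdicCompletion I A ⊗[A] FrobTwist p A) ≃+* AdicCompletion I A,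
      ∀ (b : AdicCompletion I A) (a : A),
        e (b ⊗ₜ[A] FrobTwist.mk p a) = b ^ p * algebraMap A (AdicCompletion I A) a := by
  classical
  haveI := hfin
  haveI hB : CharP (AdicCompletion I A) p := Stmt3Aux.charP_completion p I hI.ne_top
  -- find `k` with `I ^ k ≤ I.map σ`
  have hrad : I ≤ (I.map (Stmt3Aux.σ p)).radical := by
    intro a ha
    exact ⟨p, Ideal.mem_map_of_mem _ ha⟩
  obtain ⟨k0, hk0⟩ := Ideal.exists_pow_le_of_le_radical_of_fg hrad (IsNoetherian.noetherian I)
  set k := max k0 1 with hkdef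
  have hk : I ^ k ≤ I.map (Stmt3Aux.σ p) :=
    le_trans (Ideal.pow_le_pow_right (le_max_left _ _)) hk0
  have hk1 : 1 ≤ k := le_max_right _ _
  -- bijectivity of the comparison map
  have hc : Function.Bijective (Stmt3Aux.cfun p I) :=
    Function.bijective_iff_has_inverse.mpr
      ⟨Stmt3Aux.cinv p I k hk,
        fun x => Stmt3Aux.cinv_cfun p I k hk hk1 x,
        fun b => Stmt3Aux.cfun_cinv p I k hk hk1 b⟩
  have hoTP := AdicCompletion.ofTensorProduct_bijective_of_finite_of_isNoetherian I
    (FrobTwist p A)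
  have hEfun : (fun z => (Stmt3Aux.Emap p I hB z : AdicCompletion I A)) =
      (Stmt3Aux.cfun p I) ∘ (AdicCompletion.ofTensorProduct I (FrobTwist p A)) :=
    funext (fun z => Stmt3Aux.Emap_eq p I hB z)
  have hE : Function.Bijective
      (fun z => (Stmt3Aux.Emap p I hB z : AdicCompletion I A)) := by
    rw [hEfun]
    exact hc.comp hoTP
  refine ⟨RingEquiv.ofBijective
    ((Stmt3Aux.Emap p I hB).toRingHom :
      (AdicCompletion I A ⊗[A] FrobTwist p A) →+* AdicCompletion I A) hE, ?_⟩
  intro b a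
  show (Stmt3Aux.Emap p I hB (b ⊗ₜ[A] FrobTwist.mk p a) : AdicCompletion I A) = _
  rw [Stmt3Aux.Emap_tmul]
end

section
/- Let E_i = β_i · D_{i,i} where β_i are elements of a commutative ring and D_{i,j} are the matrices defined above. For indices i_1 < i_2 < ... < i_n, if consecutive indices satisfy i_k + i_{k+1} ≡ 1 (mod 2) for all k, then E_{i_1} · E_{i_2} · ⋯ · E_{i_n} = (-2)^{n-1} β_{i_1} ⋯ β_{i_n} · D_{i_1, i_n}; otherwise the product is 0. -/
/-- The matrix `D_{i,j} = [[(-1)^{i+j}, (-1)^{i+1}/λ], [(-1)^j λ, -1]]`, where `λ` is the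
unit `u` of the commutative ring `R`. -/
def Dmat {R : Type*} [CommRing R] (u : Rˣ) (i j : ℕ) : Matrix (Fin 2) (Fin 2) R :=
  !![(-1 : R) ^ (i + j), (-1 : R) ^ (i + 1) * ((u⁻¹ : Rˣ) : R);
     (-1 : R) ^ j * (u : R), -1]

lemma Dmat_mul_odd {R : Type*} [CommRing R] (u : Rˣ) (i l : ℕ) {j k : ℕ} (h : Odd (j + k)) :
    Dmat u i j * Dmat u k l = (-2 : R) • Dmat u i l := by
  have hjk : (-1:R)^j * (-1)^k = -1 := by rw [← pow_add, h.neg_one_pow]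
  have he : (-1:R)^(j+j) = 1 := Even.neg_one_pow ⟨j, rfl⟩
  have hk : (-1:R)^k = -(-1)^j := by
    have h2 : (-1:R)^j * ((-1)^j * (-1)^k) = (-1)^j * -1 := by rw [hjk]
    rwa [← mul_assoc, ← pow_add, he, one_mul, mul_neg_one] at h2
  have hj2 : (-1:R)^(j*2) = 1 := by rw [mul_comm, two_mul]; exact he
  have hu : ((u⁻¹ : Rˣ) : R) * u = 1 := u.inv_mul
  ext a b
  fin_cases a <;> fin_cases b <;>
    simp [Dmat, Matrix.mul_apply, Fin.sum_univ_two, pow_add, pow_succ, hk]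
  · linear_combination (-(-1:R)^i * (-1)^l) * hu - ((-1:R)^i * (-1)^l) * hj2
  · linear_combination (((u⁻¹:Rˣ):R) * (-1)^i) * hj2
  · linear_combination (-((u:R)) * (-1)^l) * hj2
  · linear_combination ((u:R) * ((u⁻¹:Rˣ):R)) * hj2 + hu

lemma Dmat_mul_even {R : Type*} [CommRing R] (u : Rˣ) (i l : ℕ) {j k : ℕ} (h : Even (j + k)) :
    Dmat u i j * Dmat u k l = 0 := by
  have hjk : (-1:R)^j * (-1)^k = 1 := by rw [← pow_add, h.neg_one_pow]
  have he : (-1:R)^(j+j) = 1 := Even.neg_one_pow ⟨j, rfl⟩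
  have hk : (-1:R)^k = (-1)^j := by
    have h2 : (-1:R)^j * ((-1)^j * (-1)^k) = (-1)^j * 1 := by rw [hjk]
    rwa [← mul_assoc, ← pow_add, he, one_mul, mul_one] at h2
  have hj2 : (-1:R)^(j*2) = 1 := by rw [mul_comm, two_mul]; exact he
  have hu : ((u⁻¹ : Rˣ) : R) * u = 1 := u.inv_mul
  ext a b
  fin_cases a <;> fin_cases b <;>
    simp [Dmat, Matrix.mul_apply, Fin.sum_univ_two, pow_add, pow_succ, hk]
  · linear_combination (-(-1:R)^i * (-1)^l) * hu + ((-1:R)^i * (-1)^l) * hj2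
  · linear_combination (-((u⁻¹:Rˣ):R) * (-1)^i) * hj2
  · linear_combination ((u:R) * (-1)^l) * hj2
  · linear_combination (-(u:R) * ((u⁻¹:Rˣ):R)) * hj2 - hu

lemma prod_odd {R : Type*} [CommRing R] (u : Rˣ) (β : ℕ → R) :
    ∀ (n : ℕ) (idx : Fin (n+1) → ℕ),
      (∀ q : Fin n, Odd (idx q.castSucc + idx q.succ)) →
      (List.ofFn fun q : Fin (n+1) => β (idx q) • Dmat u (idx q) (idx q)).prod
        = ((-2 : R) ^ n * ∏ q, β (idx q)) • Dmat u (idx 0) (idx (Fin.last n)) := by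
  intro n
  induction n with
  | zero =>
    intro idx _
    simp [List.ofFn_succ]
  | succ m ih =>
    intro idx hodd
    have htail := ih (fun q => idx q.succ) (fun q => by
      have := hodd q.succ
      show Odd (idx q.castSucc.succ + idx q.succ.succ)
      rw [Fin.succ_castSucc]; exact hodd q.succ)
    rw [List.ofFn_succ]
    simp only [List.prod_cons]
    rw [htail]
    simp only [Fin.succ_last, Fin.succ_zero_eq_one]
    have h01 : Odd (idx 0 + idx 1) := by simpa using hodd 0
    rw [smul_mul_assoc, mul_smul_comm, smul_smul,
      Dmat_mul_odd u (idx 0) (idx (Fin.last (m+1))) h01]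
    rw [smul_smul]
    congr 1
    rw [Fin.prod_univ_succ fun q : Fin (m+1+1) => β (idx q)]
    ring

lemma prod_even {R : Type*} [CommRing R] (u : Rˣ) (β : ℕ → R) :
    ∀ (n : ℕ) (idx : Fin (n+1) → ℕ),
      (∃ q : Fin n, Even (idx q.castSucc + idx q.succ)) →
      (List.ofFn fun q : Fin (n+1) => β (idx q) • Dmat u (idx q) (idx q)).prod = 0 := by
  intro n
  induction n with
  | zero => rintro idx ⟨q, -⟩; exact absurd q.2 (by omega)
  | succ m ih =>
    rintro idx ⟨q, hq⟩
    induction q using Fin.cases with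
    | zero =>
      have h01 : Even (idx 0 + idx 1) := by simpa using hq
      rw [List.ofFn_succ, List.ofFn_succ]
      simp only [List.prod_cons, ← mul_assoc, Fin.succ_zero_eq_one]
      rw [smul_mul_assoc, mul_smul_comm, smul_smul,
        Dmat_mul_even u (idx 0) (idx 1) h01]
      simp
    | succ j =>
      have htail := ih (fun q => idx q.succ)
        ⟨j, by show Even (idx j.castSucc.succ + idx j.succ.succ); rw [Fin.succ_castSucc]; exact hq⟩
      rw [List.ofFn_succ, List.prod_cons, htail, mul_zero]

/-- Let `E_i = β_i • D_{i,i}`.  For indices `i₁ < i₂ < ... < i_n`: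
if consecutive indices satisfy `i_k + i_{k+1} ≡ 1 (mod 2)` for all `k`, then
`E_{i₁} ⋯ E_{i_n} = (-2)^{n-1} β_{i₁} ⋯ β_{i_n} • D_{i₁, i_n}`; otherwise the
product is `0`. -/
theorem stmt_7 {R : Type*} [CommRing R] (u : Rˣ) (β : ℕ → R) (n : ℕ) (hn : 0 < n)
    (idx : Fin n → ℕ) (hmono : StrictMono idx) :
    ((∀ (q : ℕ) (h : q + 1 < n), Odd (idx ⟨q, by omega⟩ + idx ⟨q + 1, h⟩)) →
      (List.ofFn fun q : Fin n => β (idx q) • Dmat u (idx q) (idx q)).prod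
        = ((-2 : R) ^ (n - 1) * ∏ q : Fin n, β (idx q)) •
            Dmat u (idx ⟨0, hn⟩) (idx ⟨n - 1, by omega⟩)) ∧
    ((∃ (q : ℕ) (h : q + 1 < n), Even (idx ⟨q, by omega⟩ + idx ⟨q + 1, h⟩)) →
      (List.ofFn fun q : Fin n => β (idx q) • Dmat u (idx q) (idx q)).prod = 0) := by
  obtain ⟨m, rfl⟩ : ∃ m, n = m + 1 := ⟨n - 1, by omega⟩
  constructor
  · intro H
    have e0 : (⟨0, hn⟩ : Fin (m+1)) = 0 := by ext; simp
    have elast : (⟨m + 1 - 1, by omega⟩ : Fin (m+1)) = Fin.last m := by ext; simp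
    rw [e0, elast]
    have := prod_odd u β m idx (fun q => by
      have h := H q.val (by omega)
      convert h using 3 <;> ext <;> simp [Fin.castSucc, Fin.succ])
    simpa using this
  · rintro ⟨q, h, hq⟩
    exact prod_even u β m idx ⟨⟨q, by omega⟩, by
      convert hq using 3 <;> ext <;> simp [Fin.castSucc, Fin.succ]⟩
end

section
/- Let Λ_0 be the set of products α_I β_J indexed by admissible pairs (I, J) of disjoint finite sets of nonnegative integers, where α_{i,j} = x^{p^i} y^{p^j} + x^{p^j} y^{p^i} + (1/(2ε)) z^{p^i} z^{p^j} and β_i = x^{p^i} y^{p^i} + (1/(4ε)) z^{2p^i}, viewed in W[[x,y,z]]. Every monomial x^a y^b z^c occurring in such a product satisfies: the base-p digits a_k, b_k, c_k vanish for k ∉ I ∪ J; for k ∈ J, either (a_k, b_k, c_k) = (1,1,0) or (0,0,2); and the digits determine the indexing datum: J = {k : a_k + b_k + c_k = 2} and I = {k : a_k + b_k + c_k = 1} (for the Λ_0 case). Consequently, distinct elements f ≠ g of Λ_0 have disjoint sets of monomials: M(f) ∩ M(g) = ∅. -/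
open MvPolynomial

/-- The digit of `a` in base `p` at position `k`. -/
def pdig (p a k : ℕ) : ℕ := a / p ^ k % p

/-- `α_{i,j} = x^{pⁱ} y^{pʲ} + x^{pʲ} y^{pⁱ} + z^{pⁱ + pʲ}/(2ε)` in `R[[x,y,z]]`
(as a polynomial in three variables `x = X 0`, `y = X 1`, `z = X 2`). -/
noncomputable def alphaij (p : ℕ) (R : Type*) [CommRing R] [Invertible (2 : R)] (ε : Rˣ)
    (i j : ℕ) : MvPolynomial (Fin 3) R :=
  X 0 ^ p ^ i * X 1 ^ p ^ j + X 0 ^ p ^ j * X 1 ^ p ^ i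
    + C (⅟ (2 : R) * ((ε⁻¹ : Rˣ) : R)) * X 2 ^ (p ^ i + p ^ j)

/-- `β_j = x^{pʲ} y^{pʲ} + z^{2pʲ}/(4ε)`. -/
noncomputable def betaj (p : ℕ) (R : Type*) [CommRing R] [Invertible (2 : R)] (ε : Rˣ)
    (j : ℕ) : MvPolynomial (Fin 3) R :=
  X 0 ^ p ^ j * X 1 ^ p ^ j
    + C (⅟ (2 : R) * ⅟ (2 : R) * ((ε⁻¹ : Rˣ) : R)) * X 2 ^ (2 * p ^ j)

/-- The product `α_I β_J`, where the ordered set `I = {i₁ < ⋯ < i₂ₙ}` is encoded by a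
strictly monotone `iI : Fin (2n) → ℕ` (with `α_I = α_{i₁,i₂}⋯α_{i₂ₙ₋₁,i₂ₙ}`) and
`J = {j₁ < ⋯ < jₘ}` by a strictly monotone `jJ : Fin m → ℕ`. -/
noncomputable def alphaBetaProd (p : ℕ) (R : Type*) [CommRing R] [Invertible (2 : R)]
    (ε : Rˣ) {n m : ℕ} (iI : Fin (2 * n) → ℕ) (jJ : Fin m → ℕ) : MvPolynomial (Fin 3) R :=
  (∏ q : Fin n, alphaij p R ε
      (iI ⟨2 * (q : ℕ), by have := q.isLt; omega⟩)
      (iI ⟨2 * (q : ℕ) + 1, by have := q.isLt; omega⟩)) *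
    ∏ t : Fin m, betaj p R ε (jJ t)


lemma sum_lt_pow {p N : ℕ} (hp : 1 < p) (e : ℕ → ℕ) (he : ∀ k < N, e k < p) :
    ∑ k ∈ Finset.range N, e k * p ^ k < p ^ N := by
  induction N with
  | zero => simpa using Nat.one_pos
  | succ N ih =>
    rw [Finset.sum_range_succ, pow_succ]
    have h1 : ∑ k ∈ Finset.range N, e k * p ^ k < p ^ N :=
      ih (fun k hk => he k (by omega))
    have h2 : e N ≤ p - 1 := by have := he N (by omega); omega
    have h3 : e N * p ^ N ≤ (p - 1) * p ^ N := Nat.mul_le_mul_right _ h2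
    have hpN : 0 < p ^ N := Nat.pow_pos (by omega)
    nlinarith [Nat.sub_add_cancel (le_of_lt hp)]

lemma pdig_sum {p N : ℕ} (hp : 1 < p) (e : ℕ → ℕ) (he : ∀ k < N, e k < p) (j : ℕ) :
    pdig p (∑ k ∈ Finset.range N, e k * p ^ k) j = if j < N then e j else 0 := by
  induction N with
  | zero => simp [pdig]
  | succ N ih =>
    have he' : ∀ k < N, e k < p := fun k hk => he k (by omega)
    have hS : ∑ k ∈ Finset.range N, e k * p ^ k < p ^ N := sum_lt_pow hp e he'
    rw [Finset.sum_range_succ]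
    rcases lt_trichotomy j N with hj | hj | hj
    · have key : (∑ k ∈ Finset.range N, e k * p ^ k + e N * p ^ N) / p ^ j
          = (∑ k ∈ Finset.range N, e k * p ^ k) / p ^ j + e N * p ^ (N - j - 1) * p := by
        have : e N * p ^ N = e N * p ^ (N - j - 1) * p * p ^ j := by
          rw [mul_assoc, mul_assoc, ← pow_succ', ← pow_add]
          congr 2
          omega
        rw [this, Nat.add_mul_div_right _ _ (Nat.pow_pos (by omega))]
      unfold pdig
      rw [key, Nat.add_mul_mod_self_right]
      have := ih he' 
      unfold pdig at this
      rw [this, if_pos hj, if_pos (by omega)]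
    · subst hj
      unfold pdig
      rw [Nat.add_mul_div_right _ _ (Nat.pow_pos (by omega)),
        Nat.div_eq_of_lt hS, zero_add, if_pos (by omega),
        Nat.mod_eq_of_lt (he j (by omega))]
    · have htot : ∑ k ∈ Finset.range N, e k * p ^ k + e N * p ^ N < p ^ (N + 1) := by
        have := sum_lt_pow hp e he
        rwa [Finset.sum_range_succ] at this
      have : ∑ k ∈ Finset.range N, e k * p ^ k + e N * p ^ N < p ^ j :=
        lt_of_lt_of_le htot (Nat.pow_le_pow_right (by omega) (by omega))
      unfold pdig
      rw [Nat.div_eq_of_lt this, if_neg (by omega)]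
      simp

lemma self_expansion {p : ℕ} (hp : 1 < p) : ∀ N, ∀ v < p ^ N,
    ∑ k ∈ Finset.range N, pdig p v k * p ^ k = v := by
  intro N
  induction N with
  | zero =>
    intro v hv
    have : v = 0 := by simpa using hv
    subst this; simp
  | succ N ih =>
    intro v hv
    rw [Finset.sum_range_succ']
    have h1 : ∀ k, pdig p v (k + 1) = pdig p (v / p) k := by
      intro k
      unfold pdig
      rw [pow_succ', ← Nat.div_div_eq_div_mul]
    have h2 : v / p < p ^ N := by
      rw [Nat.div_lt_iff_lt_mul (by omega), ← pow_succ]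
      exact hv
    calc ∑ k ∈ Finset.range N, pdig p v (k + 1) * p ^ (k + 1) + pdig p v 0 * p ^ 0
        = p * ∑ k ∈ Finset.range N, pdig p (v / p) k * p ^ k + v % p := by
          rw [Finset.mul_sum]
          congr 1
          · apply Finset.sum_congr rfl
            intro k _
            rw [h1, pow_succ]
            ring
          · simp [pdig]
      _ = v := by rw [ih _ h2]; exact Nat.div_add_mod v p

lemma pdig_zero (p k : ℕ) : pdig p 0 k = 0 := by simp [pdig]

lemma pdig_pow {p : ℕ} (hp : 1 < p) (i k : ℕ) :
    pdig p (p ^ i) k = if k = i then 1 else 0 := by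
  have h : p ^ i = ∑ j ∈ Finset.range (i + 1), (if j = i then 1 else 0) * p ^ j := by
    simp only [ite_mul, one_mul, zero_mul]
    rw [Finset.sum_ite_eq' (Finset.range (i + 1)) i (fun j => p ^ j)]
    simp
  rw [h, pdig_sum hp _ (fun j _ => by split <;> omega)]
  split <;> split <;> omega

lemma pdig_two_pow {p : ℕ} (hp : 2 < p) (i k : ℕ) :
    pdig p (2 * p ^ i) k = if k = i then 2 else 0 := by
  have h : 2 * p ^ i = ∑ j ∈ Finset.range (i + 1), (if j = i then 2 else 0) * p ^ j := by
    simp only [ite_mul, zero_mul]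
    rw [Finset.sum_ite_eq' (Finset.range (i + 1)) i (fun j => 2 * p ^ j)]
    simp
  rw [h, pdig_sum (by omega) _ (fun j _ => by split <;> omega)]
  split <;> split <;> omega

lemma pdig_pow_add_pow {p : ℕ} (hp : 2 < p) {i j : ℕ} (hij : i ≠ j) (k : ℕ) :
    pdig p (p ^ i + p ^ j) k =
      (if k = i then 1 else 0) + (if k = j then 1 else 0) := by
  set N := max i j + 1 with hN
  have h : p ^ i + p ^ j = ∑ l ∈ Finset.range N,
      ((if l = i then 1 else 0) + (if l = j then 1 else 0)) * p ^ l := by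
    have : ∀ l, ((if l = i then 1 else 0) + (if l = j then 1 else 0)) * p ^ l
        = (if l = i then p ^ l else 0) + (if l = j then p ^ l else 0) := by
      intro l; split <;> split <;> ring
    rw [Finset.sum_congr rfl (fun l _ => this l), Finset.sum_add_distrib,
      Finset.sum_ite_eq' (Finset.range N) i (fun l => p ^ l),
      Finset.sum_ite_eq' (Finset.range N) j (fun l => p ^ l),
      if_pos (Finset.mem_range.2 (by omega)), if_pos (Finset.mem_range.2 (by omega))]
  rw [h, pdig_sum (by omega) _ (fun l _ => by split <;> split <;> omega)]
  split <;> (try rfl)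
  rename_i hk
  split <;> split <;> omega


lemma support_prod_subset' {σ R ι : Type*} [CommSemiring R] (s : Finset ι)
    (f : ι → MvPolynomial σ R) (d : σ →₀ ℕ) (hd : d ∈ (∏ i ∈ s, f i).support) :
    ∃ g : ι → (σ →₀ ℕ), (∀ i ∈ s, g i ∈ (f i).support) ∧ d = ∑ i ∈ s, g i := by
  classical
  induction s using Finset.induction generalizing d with
  | empty =>
    refine ⟨fun _ => 0, by simp, ?_⟩
    simp only [Finset.prod_empty] at hd
    have h1 : (1 : MvPolynomial σ R) = monomial 0 1 := by
      simp [monomial_zero']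
    rw [h1] at hd
    simpa using Finset.mem_singleton.1 (support_monomial_subset hd)
  | @insert a s ha ih =>
    rw [Finset.prod_insert ha] at hd
    obtain ⟨u, hu, v, hv, huv⟩ := Finset.mem_add.1 (support_mul _ _ hd)
    obtain ⟨g, hg, hgv⟩ := ih v hv
    refine ⟨Function.update g a u, ?_, ?_⟩
    · intro i hi
      by_cases hia : i = a
      · subst hia
        rw [Function.update_self]
        exact hu
      · rw [Function.update_of_ne hia]
        exact hg i ((Finset.mem_insert.1 hi).resolve_left hia)
    · rw [Finset.sum_insert ha, Function.update_self, ← huv, hgv]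
      congr 1
      exact Finset.sum_congr rfl fun i hi =>
        (Function.update_of_ne (fun h : i = a => ha (h ▸ hi)) _ _).symm

lemma support_alphaij (p : ℕ) (R : Type*) [CommRing R] [Invertible (2 : R)] (ε : Rˣ)
    (i j : ℕ) : (alphaij p R ε i j).support ⊆
      {Finsupp.single 0 (p ^ i) + Finsupp.single 1 (p ^ j),
       Finsupp.single 0 (p ^ j) + Finsupp.single 1 (p ^ i),
       Finsupp.single 2 (p ^ i + p ^ j)} := by
  classical
  unfold alphaij
  intro d hd
  have h1 : (X 0 ^ p ^ i * X 1 ^ p ^ j : MvPolynomial (Fin 3) R)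
      = monomial (Finsupp.single 0 (p ^ i) + Finsupp.single 1 (p ^ j)) 1 := by
    rw [X_pow_eq_monomial, X_pow_eq_monomial, monomial_mul, one_mul]
  have h2 : (X 0 ^ p ^ j * X 1 ^ p ^ i : MvPolynomial (Fin 3) R)
      = monomial (Finsupp.single 0 (p ^ j) + Finsupp.single 1 (p ^ i)) 1 := by
    rw [X_pow_eq_monomial, X_pow_eq_monomial, monomial_mul, one_mul]
  rcases Finset.mem_union.1 (support_add hd) with hd' | hd'
  · rcases Finset.mem_union.1 (support_add hd') with h | h
    · rw [h1] at h
      have := support_monomial_subset h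
      simp only [Finset.mem_insert, Finset.mem_singleton] at *
      tauto
    · rw [h2] at h
      have := support_monomial_subset h
      simp only [Finset.mem_insert, Finset.mem_singleton] at *
      tauto
  · rw [C_mul_X_pow_eq_monomial] at hd'
    have := support_monomial_subset hd'
    simp only [Finset.mem_insert, Finset.mem_singleton] at *
    tauto

lemma support_betaj (p : ℕ) (R : Type*) [CommRing R] [Invertible (2 : R)] (ε : Rˣ)
    (j : ℕ) : (betaj p R ε j).support ⊆
      {Finsupp.single 0 (p ^ j) + Finsupp.single 1 (p ^ j),
       Finsupp.single 2 (2 * p ^ j)} := by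
  classical
  unfold betaj
  intro d hd
  have h1 : (X 0 ^ p ^ j * X 1 ^ p ^ j : MvPolynomial (Fin 3) R)
      = monomial (Finsupp.single 0 (p ^ j) + Finsupp.single 1 (p ^ j)) 1 := by
    rw [X_pow_eq_monomial, X_pow_eq_monomial, monomial_mul, one_mul]
  rcases Finset.mem_union.1 (support_add hd) with hd' | hd'
  · rw [h1] at hd'
    have := support_monomial_subset hd'
    simp only [Finset.mem_insert, Finset.mem_singleton] at *
    tauto
  · rw [C_mul_X_pow_eq_monomial] at hd'
    have := support_monomial_subset hd'
    simp only [Finset.mem_insert, Finset.mem_singleton] at *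
    tauto

lemma main_digits (p : ℕ) (hp2 : 2 < p) (R : Type) [CommRing R]
    [Invertible (2 : R)] (ε : Rˣ) {n m : ℕ} (iI : Fin (2 * n) → ℕ) (jJ : Fin m → ℕ)
    (hiI : StrictMono iI) (hjJ : StrictMono jJ) (hdisj : ∀ a b, iI a ≠ jJ b) :
    ∀ d ∈ (alphaBetaProd p R ε iI jJ).support,
      (∀ k : ℕ, k ∉ Set.range iI → k ∉ Set.range jJ →
        pdig p (d 0) k = 0 ∧ pdig p (d 1) k = 0 ∧ pdig p (d 2) k = 0) ∧
      (∀ t : Fin m,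
        (pdig p (d 0) (jJ t) = 1 ∧ pdig p (d 1) (jJ t) = 1 ∧ pdig p (d 2) (jJ t) = 0) ∨
        (pdig p (d 0) (jJ t) = 0 ∧ pdig p (d 1) (jJ t) = 0 ∧ pdig p (d 2) (jJ t) = 2)) ∧
      Set.range jJ = {k : ℕ | pdig p (d 0) k + pdig p (d 1) k + pdig p (d 2) k = 2} ∧
      Set.range iI = {k : ℕ | pdig p (d 0) k + pdig p (d 1) k + pdig p (d 2) k = 1} := by
  classical
  have hp1 : 1 < p := by omega
  intro d hd
  unfold alphaBetaProd at hd
  obtain ⟨u, hu, v, hv, huv⟩ := Finset.mem_add.1 (support_mul _ _ hd)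
  obtain ⟨a, ha, hau⟩ := support_prod_subset' Finset.univ _ u hu
  obtain ⟨b, hb, hbv⟩ := support_prod_subset' Finset.univ _ v hv
  -- the bound N
  set N : ℕ := (Finset.image iI Finset.univ ∪ Finset.image jJ Finset.univ).sup id + 1 with hNdef
  have hNi : ∀ r, iI r < N := by
    intro r
    have : iI r ≤ (Finset.image iI Finset.univ ∪ Finset.image jJ Finset.univ).sup id :=
      Finset.le_sup (f := id) (Finset.mem_union_left _ (Finset.mem_image_of_mem iI (Finset.mem_univ r)))
    omega
  have hNj : ∀ t, jJ t < N := by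
    intro t
    have : jJ t ≤ (Finset.image iI Finset.univ ∪ Finset.image jJ Finset.univ).sup id :=
      Finset.le_sup (f := id) (Finset.mem_union_right _ (Finset.mem_image_of_mem jJ (Finset.mem_univ t)))
    omega
  -- per-factor digit facts for the alpha factors
  have key_a : ∀ q : Fin n,
      (∀ c : Fin 3, a q c < p ^ N) ∧
      (∀ c : Fin 3, ∀ k : ℕ,
        k ≠ iI ⟨2 * (q : ℕ), by have := q.isLt; omega⟩ →
        k ≠ iI ⟨2 * (q : ℕ) + 1, by have := q.isLt; omega⟩ → pdig p (a q c) k = 0) ∧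
      (∀ k : ℕ, (k = iI ⟨2 * (q : ℕ), by have := q.isLt; omega⟩ ∨
          k = iI ⟨2 * (q : ℕ) + 1, by have := q.isLt; omega⟩) →
        pdig p (a q 0) k + pdig p (a q 1) k + pdig p (a q 2) k = 1) := by
    intro q
    set i := iI ⟨2 * (q : ℕ), by have := q.isLt; omega⟩ with hi
    set j := iI ⟨2 * (q : ℕ) + 1, by have := q.isLt; omega⟩ with hj
    have hijlt : i < j := hiI (by simp [Fin.mk_lt_mk])
    have hij : i ≠ j := Nat.ne_of_lt hijlt
    have hiN : i < N := hNi _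
    have hjN : j < N := hNi _
    have hmem := support_alphaij p R ε i j (ha q (Finset.mem_univ q))
    simp only [Finset.mem_insert, Finset.mem_singleton] at hmem
    have hpowN : ∀ l : ℕ, l < N → p ^ l < p ^ N := fun l hl => Nat.pow_lt_pow_right hp1 hl
    have hsum_lt : p ^ i + p ^ j < p ^ N := by
      have h1 : p ^ i < p ^ j := Nat.pow_lt_pow_right hp1 hijlt
      have h2 : 2 * p ^ j ≤ p ^ (j + 1) := by
        rw [pow_succ, mul_comm (p ^ j) p]
        exact Nat.mul_le_mul_right _ (by omega)
      have h3 : p ^ (j + 1) ≤ p ^ N := Nat.pow_le_pow_right (by omega) (by omega)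
      omega
    rcases hmem with h | h | h <;>
      refine ⟨?_, ?_, ?_⟩
    · intro c
      fin_cases c <;>
        simp [h, Finsupp.add_apply, Finsupp.single_apply] <;>
        first
          | exact hpowN _ hiN
          | exact hpowN _ hjN
          | positivity
    · intro c k hk1 hk2
      fin_cases c <;>
        simp [h, Finsupp.add_apply, Finsupp.single_apply, pdig_zero, pdig_pow hp1] <;>
        omega
    · intro k hk
      have e0 : a q 0 = p ^ i := by rw [h]; simp [Finsupp.add_apply, Finsupp.single_apply]
      have e1 : a q 1 = p ^ j := by rw [h]; simp [Finsupp.add_apply, Finsupp.single_apply]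
      have e2 : a q 2 = 0 := by rw [h]; simp [Finsupp.add_apply, Finsupp.single_apply]
      rw [e0, e1, e2, pdig_pow hp1, pdig_pow hp1, pdig_zero]
      rcases hk with rfl | rfl
      · simp [hij]
      · simp [Ne.symm hij]
    · intro c
      fin_cases c <;>
        simp [h, Finsupp.add_apply, Finsupp.single_apply] <;>
        first
          | exact hpowN _ hiN
          | exact hpowN _ hjN
          | positivity
    · intro c k hk1 hk2
      fin_cases c <;>
        simp [h, Finsupp.add_apply, Finsupp.single_apply, pdig_zero, pdig_pow hp1] <;>
        omega
    · intro k hk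
      have e0 : a q 0 = p ^ j := by rw [h]; simp [Finsupp.add_apply, Finsupp.single_apply]
      have e1 : a q 1 = p ^ i := by rw [h]; simp [Finsupp.add_apply, Finsupp.single_apply]
      have e2 : a q 2 = 0 := by rw [h]; simp [Finsupp.add_apply, Finsupp.single_apply]
      rw [e0, e1, e2, pdig_pow hp1, pdig_pow hp1, pdig_zero]
      rcases hk with rfl | rfl
      · simp [hij]
      · simp [Ne.symm hij]
    · intro c
      fin_cases c <;>
        simp [h, Finsupp.single_apply] <;>
        first
          | positivity
          | exact hsum_lt
    · intro c k hk1 hk2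
      fin_cases c <;>
        simp [h, Finsupp.single_apply, pdig_zero, pdig_pow_add_pow hp2 hij] <;>
        omega
    · intro k hk
      have e0 : a q 0 = 0 := by rw [h]; simp [Finsupp.single_apply]
      have e1 : a q 1 = 0 := by rw [h]; simp [Finsupp.single_apply]
      have e2 : a q 2 = p ^ i + p ^ j := by rw [h]; simp [Finsupp.single_apply]
      rw [e0, e1, e2, pdig_zero, pdig_pow_add_pow hp2 hij]
      rcases hk with rfl | rfl
      · simp [hij]
      · simp [Ne.symm hij]
  -- per-factor digit facts for the beta factors
  have key_b : ∀ t : Fin m,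
      (∀ c : Fin 3, b t c < p ^ N) ∧
      (∀ c : Fin 3, ∀ k : ℕ, k ≠ jJ t → pdig p (b t c) k = 0) ∧
      ((pdig p (b t 0) (jJ t) = 1 ∧ pdig p (b t 1) (jJ t) = 1 ∧ pdig p (b t 2) (jJ t) = 0) ∨
       (pdig p (b t 0) (jJ t) = 0 ∧ pdig p (b t 1) (jJ t) = 0 ∧ pdig p (b t 2) (jJ t) = 2)) := by
    intro t
    set j := jJ t with hj
    have hjN : j < N := hNj t
    have h2pj : 2 * p ^ j < p ^ N := by
      have hpj : 0 < p ^ j := Nat.pow_pos (by omega)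
      have h2 : 2 * p ^ j < p ^ (j + 1) := by
        rw [pow_succ, mul_comm (p ^ j) p]
        nlinarith
      have h3 : p ^ (j + 1) ≤ p ^ N := Nat.pow_le_pow_right (by omega) (by omega)
      omega
    have hpowN : ∀ l : ℕ, l < N → p ^ l < p ^ N := fun l hl => Nat.pow_lt_pow_right hp1 hl
    have hmem := support_betaj p R ε j (hb t (Finset.mem_univ t))
    simp only [Finset.mem_insert, Finset.mem_singleton] at hmem
    rcases hmem with h | h <;> refine ⟨?_, ?_, ?_⟩
    · intro c
      fin_cases c <;>
        simp [h, Finsupp.add_apply, Finsupp.single_apply] <;>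
        first
          | exact hpowN _ hjN
          | positivity
    · intro c k hk
      fin_cases c <;>
        simp [h, Finsupp.add_apply, Finsupp.single_apply, pdig_zero, pdig_pow hp1] <;>
        omega
    · left
      have e0 : b t 0 = p ^ j := by rw [h]; simp [Finsupp.add_apply, Finsupp.single_apply]
      have e1 : b t 1 = p ^ j := by rw [h]; simp [Finsupp.add_apply, Finsupp.single_apply]
      have e2 : b t 2 = 0 := by rw [h]; simp [Finsupp.add_apply, Finsupp.single_apply]
      rw [e0, e1, e2, pdig_pow hp1, pdig_zero]
      simp
    · intro c
      fin_cases c <;>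
        simp [h, Finsupp.single_apply] <;>
        first
          | exact h2pj
          | positivity
    · intro c k hk
      fin_cases c <;>
        simp [h, Finsupp.single_apply, pdig_zero, pdig_two_pow hp2] <;>
        omega
    · right
      have e0 : b t 0 = 0 := by rw [h]; simp [Finsupp.single_apply]
      have e1 : b t 1 = 0 := by rw [h]; simp [Finsupp.single_apply]
      have e2 : b t 2 = 2 * p ^ j := by rw [h]; simp [Finsupp.single_apply]
      rw [e0, e1, e2, pdig_zero, pdig_two_pow hp2]
      simp
  -- the coordinates of d decompose
  have hd0 : ∀ c : Fin 3, d c = (∑ q : Fin n, a q c) + ∑ t : Fin m, b t c := by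
    intro c
    rw [← huv, hau, hbv]
    simp [Finsupp.add_apply, Finsupp.finset_sum_apply]
  -- the base-p expansion of the coordinates of d
  have hexp : ∀ c : Fin 3, d c = ∑ k ∈ Finset.range N,
      ((∑ q : Fin n, pdig p (a q c) k) + ∑ t : Fin m, pdig p (b t c) k) * p ^ k := by
    intro c
    rw [hd0 c]
    have h1 : ∑ k ∈ Finset.range N,
        ((∑ q : Fin n, pdig p (a q c) k) + ∑ t : Fin m, pdig p (b t c) k) * p ^ k
        = (∑ q : Fin n, ∑ k ∈ Finset.range N, pdig p (a q c) k * p ^ k)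
          + ∑ t : Fin m, ∑ k ∈ Finset.range N, pdig p (b t c) k * p ^ k := by
      have e1 : ∑ k ∈ Finset.range N,
            ((∑ q : Fin n, pdig p (a q c) k) + ∑ t : Fin m, pdig p (b t c) k) * p ^ k
          = ∑ k ∈ Finset.range N,
            ((∑ q : Fin n, pdig p (a q c) k * p ^ k)
              + ∑ t : Fin m, pdig p (b t c) k * p ^ k) :=
        Finset.sum_congr rfl fun k _ => by rw [add_mul, Finset.sum_mul, Finset.sum_mul]
      rw [e1, Finset.sum_add_distrib]
      congr 1 <;> exact Finset.sum_comm
    rw [h1]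
    congr 1
    · exact Finset.sum_congr rfl fun q _ => (self_expansion hp1 N _ ((key_a q).1 c)).symm
    · exact Finset.sum_congr rfl fun t _ => (self_expansion hp1 N _ ((key_b t).1 c)).symm
  -- values of the digit candidates
  have hE0 : ∀ c : Fin 3, ∀ k : ℕ, k ∉ Set.range iI → k ∉ Set.range jJ →
      (∑ q : Fin n, pdig p (a q c) k) + ∑ t : Fin m, pdig p (b t c) k = 0 := by
    intro c k hk1 hk2
    have h1 : ∑ q : Fin n, pdig p (a q c) k = 0 :=
      Finset.sum_eq_zero fun q _ => (key_a q).2.1 c k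
        (fun he => hk1 ⟨_, he.symm⟩) (fun he => hk1 ⟨_, he.symm⟩)
    have h2 : ∑ t : Fin m, pdig p (b t c) k = 0 :=
      Finset.sum_eq_zero fun t _ => (key_b t).2.1 c k (fun he => hk2 ⟨t, he.symm⟩)
    rw [h1, h2]
  have hEj : ∀ c : Fin 3, ∀ t : Fin m,
      (∑ q : Fin n, pdig p (a q c) (jJ t)) + ∑ t' : Fin m, pdig p (b t' c) (jJ t)
        = pdig p (b t c) (jJ t) := by
    intro c t
    rw [Finset.sum_eq_zero (fun q _ => (key_a q).2.1 c (jJ t)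
        (fun he => hdisj _ t he.symm) (fun he => hdisj _ t he.symm)), zero_add]
    exact Finset.sum_eq_single t
      (fun t' _ ht' => (key_b t').2.1 c (jJ t)
        (fun he => ht' (hjJ.injective he.symm)))
      (fun habs => absurd (Finset.mem_univ t) habs)
  have hEi : ∀ c : Fin 3, ∀ r : Fin (2 * n),
      (∑ q : Fin n, pdig p (a q c) (iI r)) + ∑ t : Fin m, pdig p (b t c) (iI r)
        = pdig p (a ⟨(r : ℕ) / 2, by have := r.isLt; omega⟩ c) (iI r) := by
    intro c r
    rw [Finset.sum_eq_zero (fun t _ => (key_b t).2.1 c (iI r)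
        (fun he => hdisj r t he)), add_zero]
    refine Finset.sum_eq_single _ ?_ (fun habs => absurd (Finset.mem_univ _) habs)
    intro q _ hq
    refine (key_a q).2.1 c (iI r) (fun he => hq ?_) (fun he => hq ?_)
    · have : r = ⟨2 * (q : ℕ), by have := q.isLt; omega⟩ := hiI.injective he
      apply Fin.ext
      have hr : (r : ℕ) = 2 * (q : ℕ) := congrArg Fin.val this
      simp [hr]
    · have : r = ⟨2 * (q : ℕ) + 1, by have := q.isLt; omega⟩ := hiI.injective he
      apply Fin.ext
      have hr : (r : ℕ) = 2 * (q : ℕ) + 1 := congrArg Fin.val this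
      simp [hr]
      omega
  have hr_eq : ∀ r : Fin (2 * n),
      iI r = iI ⟨2 * ((r : ℕ) / 2), by have := r.isLt; omega⟩ ∨
      iI r = iI ⟨2 * ((r : ℕ) / 2) + 1, by have := r.isLt; omega⟩ := by
    intro r
    by_cases h2 : (r : ℕ) % 2 = 0
    · left
      congr 1
      apply Fin.ext
      simp only [Fin.val_mk]
      omega
    · right
      congr 1
      apply Fin.ext
      simp only [Fin.val_mk]
      omega
  -- the digit candidates are < p
  have hElt : ∀ c : Fin 3, ∀ k : ℕ,
      (∑ q : Fin n, pdig p (a q c) k) + ∑ t : Fin m, pdig p (b t c) k < p := by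
    intro c k
    have hc : c = 0 ∨ c = 1 ∨ c = 2 := by fin_cases c <;> simp
    by_cases hkj : k ∈ Set.range jJ
    · obtain ⟨t, rfl⟩ := hkj
      rw [hEj c t]
      rcases (key_b t).2.2 with ⟨h0, h1, h2⟩ | ⟨h0, h1, h2⟩ <;>
        rcases hc with rfl | rfl | rfl <;> omega
    · by_cases hki : k ∈ Set.range iI
      · obtain ⟨r, rfl⟩ := hki
        rw [hEi c r]
        have htot := (key_a ⟨(r : ℕ) / 2, by have := r.isLt; omega⟩).2.2 (iI r) (hr_eq r)
        rcases hc with rfl | rfl | rfl <;> omega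
      · rw [hE0 c k hki hkj]
        omega
  -- the digits of d
  have hpdig : ∀ c : Fin 3, ∀ k : ℕ, pdig p (d c) k =
      if k < N then (∑ q : Fin n, pdig p (a q c) k) + ∑ t : Fin m, pdig p (b t c) k
      else 0 := by
    intro c k
    rw [hexp c]
    exact pdig_sum hp1 _ (fun l _ => hElt c l) k
  have hout : ∀ c : Fin 3, ∀ k : ℕ, k ∉ Set.range iI → k ∉ Set.range jJ →
      pdig p (d c) k = 0 := by
    intro c k hk1 hk2
    rw [hpdig c k]
    split
    · exact hE0 c k hk1 hk2
    · rfl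
  have hdig_j : ∀ c : Fin 3, ∀ t : Fin m, pdig p (d c) (jJ t) = pdig p (b t c) (jJ t) := by
    intro c t
    rw [hpdig c (jJ t), if_pos (hNj t)]
    exact hEj c t
  have hdig_i : ∀ c : Fin 3, ∀ r : Fin (2 * n), pdig p (d c) (iI r) =
      pdig p (a ⟨(r : ℕ) / 2, by have := r.isLt; omega⟩ c) (iI r) := by
    intro c r
    rw [hpdig c (iI r), if_pos (hNi r)]
    exact hEi c r
  have hsum_j : ∀ t : Fin m,
      pdig p (d 0) (jJ t) + pdig p (d 1) (jJ t) + pdig p (d 2) (jJ t) = 2 := by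
    intro t
    rw [hdig_j 0 t, hdig_j 1 t, hdig_j 2 t]
    rcases (key_b t).2.2 with ⟨h0, h1, h2⟩ | ⟨h0, h1, h2⟩ <;> omega
  have hsum_i : ∀ r : Fin (2 * n),
      pdig p (d 0) (iI r) + pdig p (d 1) (iI r) + pdig p (d 2) (iI r) = 1 := by
    intro r
    rw [hdig_i 0 r, hdig_i 1 r, hdig_i 2 r]
    exact (key_a _).2.2 (iI r) (hr_eq r)
  refine ⟨fun k hk1 hk2 => ⟨hout 0 k hk1 hk2, hout 1 k hk1 hk2, hout 2 k hk1 hk2⟩, ?_, ?_, ?_⟩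
  · intro t
    rw [hdig_j 0 t, hdig_j 1 t, hdig_j 2 t]
    exact (key_b t).2.2
  · ext k
    simp only [Set.mem_range, Set.mem_setOf_eq]
    constructor
    · rintro ⟨t, rfl⟩
      exact hsum_j t
    · intro hs
      by_contra hk2
      have hk2' : k ∉ Set.range jJ := fun ⟨t, ht⟩ => hk2 ⟨t, ht⟩
      by_cases hk1 : k ∈ Set.range iI
      · obtain ⟨r, rfl⟩ := hk1
        have := hsum_i r
        omega
      · have h0 := hout 0 k hk1 hk2'
        have h1 := hout 1 k hk1 hk2'
        have h2 := hout 2 k hk1 hk2'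
        omega
  · ext k
    simp only [Set.mem_range, Set.mem_setOf_eq]
    constructor
    · rintro ⟨r, rfl⟩
      exact hsum_i r
    · intro hs
      by_contra hk1
      have hk1' : k ∉ Set.range iI := fun ⟨r, hr⟩ => hk1 ⟨r, hr⟩
      by_cases hk2 : k ∈ Set.range jJ
      · obtain ⟨t, rfl⟩ := hk2
        have := hsum_j t
        omega
      · have h0 := hout 0 k hk1' hk2
        have h1 := hout 1 k hk1' hk2
        have h2 := hout 2 k hk1' hk2
        omega

/-- Every monomial `x^a y^b z^c` occurring in a product `α_I β_J`
(for an admissible datum: `I`, `J` disjoint, increasingly enumerated) has base-`p`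
digits vanishing outside `I ∪ J`; at each `k ∈ J` the digit triple is `(1,1,0)` or
`(0,0,2)`; and the digits recover the datum: `J = {k : aₖ+bₖ+cₖ = 2}` and
`I = {k : aₖ+bₖ+cₖ = 1}`.  Consequently two such products attached to distinct data
have disjoint sets of monomials. -/
theorem stmt_16 (p : ℕ) [Fact p.Prime] (hp : Odd p) (R : Type) [CommRing R]
    [Invertible (2 : R)] (ε : Rˣ) {n m : ℕ} (iI : Fin (2 * n) → ℕ) (jJ : Fin m → ℕ)
    (hiI : StrictMono iI) (hjJ : StrictMono jJ) (hdisj : ∀ a b, iI a ≠ jJ b) :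
    (∀ d ∈ (alphaBetaProd p R ε iI jJ).support,
      (∀ k : ℕ, k ∉ Set.range iI → k ∉ Set.range jJ →
        pdig p (d 0) k = 0 ∧ pdig p (d 1) k = 0 ∧ pdig p (d 2) k = 0) ∧
      (∀ t : Fin m,
        (pdig p (d 0) (jJ t) = 1 ∧ pdig p (d 1) (jJ t) = 1 ∧ pdig p (d 2) (jJ t) = 0) ∨
        (pdig p (d 0) (jJ t) = 0 ∧ pdig p (d 1) (jJ t) = 0 ∧ pdig p (d 2) (jJ t) = 2)) ∧
      Set.range jJ = {k : ℕ | pdig p (d 0) k + pdig p (d 1) k + pdig p (d 2) k = 2} ∧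
      Set.range iI = {k : ℕ | pdig p (d 0) k + pdig p (d 1) k + pdig p (d 2) k = 1}) ∧
    (∀ {n' m' : ℕ} (iI' : Fin (2 * n') → ℕ) (jJ' : Fin m' → ℕ),
      StrictMono iI' → StrictMono jJ' → (∀ a b, iI' a ≠ jJ' b) →
      (Set.range iI ≠ Set.range iI' ∨ Set.range jJ ≠ Set.range jJ') →
      Disjoint (alphaBetaProd p R ε iI jJ).support
        (alphaBetaProd p R ε iI' jJ').support) := by
  have hp2 : 2 < p := by
    obtain ⟨k, hk⟩ := hp
    have h2 := (Fact.out : p.Prime).two_le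
    omega
  constructor
  · exact main_digits p hp2 R ε iI jJ hiI hjJ hdisj
  · intro n' m' iI' jJ' hiI' hjJ' hdisj' hne
    rw [Finset.disjoint_left]
    intro d hd hd'
    obtain ⟨_, _, hJ, hI⟩ := main_digits p hp2 R ε iI jJ hiI hjJ hdisj d hd
    obtain ⟨_, _, hJ', hI'⟩ := main_digits p hp2 R ε iI' jJ' hiI' hjJ' hdisj' d hd'
    rcases hne with h | h
    · exact h (hI.trans hI'.symm)
    · exact h (hJ.trans hJ'.symm)
end
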